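/- arXiv:2511.19675 — 12 statements merged into one kernel-verified Lean document; each statement's English description precedes it below -/
import Mathlib

section
/- Let g₁,…,g_m : ℝⁿ → ℝ be differentiable, let α > 0 and w₁,…,w_m > 0, and let x ∈ ℝⁿ be feasible (g_i(x) ≤ 0 for all i). If MFCQ holds at x, then there exists u ∈ ℝⁿ such that ⟨∇g_i(x), u⟩ < −α g_i(x) − w_i‖u‖² for every i ∈ {1,…,m}; that is, the direction-finding QCQP at x is strictly feasible. -/
open scoped RealInnerProductSpace
open Filter Topology

/-- Strict feasibility of the direction-finding QCQP under MFCQ. -/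
theorem qcqp_strictly_feasible {n m : ℕ}
    (g : Fin m → EuclideanSpace ℝ (Fin n) → ℝ)
    (hg : ∀ i, Differentiable ℝ (g i))
    (α : ℝ) (hα : 0 < α)
    (w : Fin m → ℝ) (hw : ∀ i, 0 < w i)
    (x : EuclideanSpace ℝ (Fin n))
    (hfeas : ∀ i, g i x ≤ 0)
    (hMFCQ : ∃ d : EuclideanSpace ℝ (Fin n),
      ∀ i, g i x = 0 → ⟪gradient (g i) x, d⟫ < 0) :
    ∃ u : EuclideanSpace ℝ (Fin n),
      ∀ i, ⟪gradient (g i) x, u⟫ < -α * g i x - w i * ‖u‖ ^ 2 := by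
  obtain ⟨d, hd⟩ := hMFCQ
  have key : ∀ᶠ t : ℝ in 𝓝[>] 0, ∀ i,
      t * ⟪gradient (g i) x, d⟫ + α * g i x + w i * (t ^ 2 * ‖d‖ ^ 2) < 0 := by
    rw [eventually_all]
    intro i
    rcases lt_or_eq_of_le (hfeas i) with hlt | heq
    · have hc : Filter.Tendsto
          (fun t : ℝ => t * ⟪gradient (g i) x, d⟫ + α * g i x + w i * (t ^ 2 * ‖d‖ ^ 2))
          (𝓝 0) (𝓝 (0 * ⟪gradient (g i) x, d⟫ + α * g i x + w i * (0 ^ 2 * ‖d‖ ^ 2))) := by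
        apply Continuous.tendsto; fun_prop
      have h0 : 0 * ⟪gradient (g i) x, d⟫ + α * g i x + w i * ((0:ℝ) ^ 2 * ‖d‖ ^ 2) < 0 := by
        have := mul_pos hα (neg_pos.mpr hlt)
        nlinarith
      exact eventually_nhdsWithin_of_eventually_nhds (hc.eventually_lt_const h0)
    · have hip := hd i heq
      have hc : Filter.Tendsto (fun t : ℝ => ⟪gradient (g i) x, d⟫ + w i * (t * ‖d‖ ^ 2))
          (𝓝 0) (𝓝 (⟪gradient (g i) x, d⟫ + w i * (0 * ‖d‖ ^ 2))) := by
        apply Continuous.tendsto; fun_prop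
      have h0 : ⟪gradient (g i) x, d⟫ + w i * ((0:ℝ) * ‖d‖ ^ 2) < 0 := by simpa using hip
      have h1 := eventually_nhdsWithin_of_eventually_nhds (s := Set.Ioi (0:ℝ))
        (hc.eventually_lt_const h0)
      filter_upwards [h1, self_mem_nhdsWithin] with t ht htpos
      have htpos' : (0:ℝ) < t := htpos
      rw [heq]
      nlinarith
  obtain ⟨t, ht⟩ := key.exists
  refine ⟨t • d, fun i => ?_⟩
  have h := ht i
  have h1 : ⟪gradient (g i) x, t • d⟫ = t * ⟪gradient (g i) x, d⟫ := real_inner_smul_right _ _ _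
  have h2 : ‖t • d‖ ^ 2 = t ^ 2 * ‖d‖ ^ 2 := by
    rw [norm_smul, mul_pow]; simp [sq_abs]
  rw [h1, h2]
  linarith
end

section
/- Let g₁,…,g_m : ℝⁿ → ℝ be continuously differentiable, let α > 0 and w₁,…,w_m > 0, and let F = {x ∈ ℝⁿ : g_i(x) ≤ 0 for all i}. If MFCQ holds at every point of F, then there exists an open set U ⊆ ℝⁿ with F ⊆ U such that for every y ∈ U there exists u ∈ ℝⁿ with ⟨∇g_i(y), u⟩ + w_i‖u‖² + α g_i(y) < 0 for all i ∈ {1,…,m}. -/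
open scoped RealInnerProductSpace

lemma continuous_gradient' {n : ℕ} {f : EuclideanSpace ℝ (Fin n) → ℝ}
    (hf : ContDiff ℝ 1 f) : Continuous (fun x => gradient f x) := by
  have : Continuous (fun x => fderiv ℝ f x) := hf.continuous_fderiv one_ne_zero
  exact (InnerProductSpace.toDual ℝ _).symm.continuous.comp this

/-- Strict feasibility of the QCQP on an open neighborhood of the
feasible set, under MFCQ on the feasible set. -/
theorem qcqp_strictly_feasible_open_set {n m : ℕ}
    (g : Fin m → EuclideanSpace ℝ (Fin n) → ℝ)
    (hg : ∀ i, ContDiff ℝ 1 (g i))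
    (α : ℝ) (hα : 0 < α)
    (w : Fin m → ℝ) (hw : ∀ i, 0 < w i)
    (F : Set (EuclideanSpace ℝ (Fin n)))
    (hF : F = {x | ∀ i, g i x ≤ 0})
    (hMFCQ : ∀ x ∈ F, ∃ d : EuclideanSpace ℝ (Fin n),
      ∀ i, g i x = 0 → ⟪gradient (g i) x, d⟫ < 0) :
    ∃ U : Set (EuclideanSpace ℝ (Fin n)), IsOpen U ∧ F ⊆ U ∧
      ∀ y ∈ U, ∃ u : EuclideanSpace ℝ (Fin n),
        ∀ i, ⟪gradient (g i) y, u⟫ + w i * ‖u‖ ^ 2 + α * g i y < 0 := by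
  have key : ∀ x ∈ F, ∃ V : Set (EuclideanSpace ℝ (Fin n)), IsOpen V ∧ x ∈ V ∧
      ∀ y ∈ V, ∃ u, ∀ i, ⟪gradient (g i) y, u⟫ + w i * ‖u‖ ^ 2 + α * g i y < 0 := by
    intro x hx
    obtain ⟨d, hd⟩ := hMFCQ x hx
    have hx' : ∀ i, g i x ≤ 0 := by rw [hF] at hx; exact hx
    -- find a good u at x
    have hev : ∀ i : Fin m, ∀ᶠ t in nhdsWithin (0:ℝ) (Set.Ioi 0),
        ⟪gradient (g i) x, t • d⟫ + w i * ‖t • d‖ ^ 2 + α * g i x < 0 := by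
      intro i
      rcases lt_or_eq_of_le (hx' i) with h | h
      · -- inactive constraint
        have hsm : Continuous (fun t : ℝ => t • d) := continuous_id.smul continuous_const
        have hc : Continuous (fun t : ℝ =>
            ⟪gradient (g i) x, t • d⟫ + w i * ‖t • d‖ ^ 2 + α * g i x) :=
          ((continuous_const.inner hsm).add
            (continuous_const.mul ((hsm.norm.pow 2)))).add continuous_const
        have h0 : ⟪gradient (g i) x, (0:ℝ) • d⟫ + w i * ‖(0:ℝ) • d‖ ^ 2 + α * g i x < 0 := by
          simp [mul_neg_of_pos_of_neg hα h]
        have := (hc.continuousAt (x := (0:ℝ))).eventually_lt continuousAt_const h0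
        exact this.filter_mono nhdsWithin_le_nhds
      · -- active constraint
        have hc : ⟪gradient (g i) x, d⟫ < 0 := hd i h
        have hdne : d ≠ 0 := by
          rintro rfl; simp at hc
        have hdn : 0 < ‖d‖ := norm_pos_iff.mpr hdne
        set c := ⟪gradient (g i) x, d⟫ with hcdef
        have hε : 0 < -c / (w i * ‖d‖ ^ 2) :=
          div_pos (neg_pos.mpr hc) (mul_pos (hw i) (pow_pos hdn 2))
        filter_upwards [Ioo_mem_nhdsGT_of_mem (Set.mem_Ico.mpr ⟨le_rfl, hε⟩)] with t ht
        obtain ⟨ht0, htε⟩ := ht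
        have hne : (0:ℝ) < w i * ‖d‖ ^ 2 := mul_pos (hw i) (pow_pos hdn 2)
        have h1 : t * (w i * ‖d‖ ^ 2) < -c := by
          rw [lt_div_iff₀ hne] at htε; linarith
        have : ⟪gradient (g i) x, t • d⟫ = t * c := real_inner_smul_right _ _ _
        have hns : ‖t • d‖ = t * ‖d‖ := by
          rw [norm_smul, Real.norm_eq_abs, abs_of_pos ht0]
        rw [this, h, hns]
        nlinarith [ht0, hne]
    have : ∀ᶠ t in nhdsWithin (0:ℝ) (Set.Ioi 0), ∀ i,
        ⟪gradient (g i) x, t • d⟫ + w i * ‖t • d‖ ^ 2 + α * g i x < 0 :=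
      Filter.eventually_all.2 hev
    obtain ⟨t, ht⟩ := this.exists
    set u := t • d with hu
    -- the neighborhood
    refine ⟨⋂ i, (fun y => ⟪gradient (g i) y, u⟫ + w i * ‖u‖ ^ 2 + α * g i y) ⁻¹' Set.Iio 0,
      ?_, ?_, ?_⟩
    · apply isOpen_iInter_of_finite
      intro i
      apply IsOpen.preimage _ isOpen_Iio
      have h1 : Continuous (fun y => gradient (g i) y) := continuous_gradient' (hg i)
      have h2 : Continuous (g i) := (hg i).continuous
      exact ((h1.inner continuous_const).add continuous_const).add (continuous_const.mul h2)
    · exact Set.mem_iInter.mpr fun i => ht i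
    · intro y hy
      exact ⟨u, fun i => Set.mem_iInter.mp hy i⟩
  choose V hVo hVx hV using key
  refine ⟨⋃ x, ⋃ h : x ∈ F, V x h, ?_, ?_, ?_⟩
  · exact isOpen_iUnion fun x => isOpen_iUnion fun h => hVo x h
  · intro x hx
    exact Set.mem_iUnion.mpr ⟨x, Set.mem_iUnion.mpr ⟨hx, hVx x hx⟩⟩
  · intro y hy
    obtain ⟨x, hx⟩ := Set.mem_iUnion.mp hy
    obtain ⟨hxF, hyV⟩ := Set.mem_iUnion.mp hx
    exact hV x hxF y hyV
end

section
/- Let f, g₁,…,g_m : ℝⁿ → ℝ be differentiable, α > 0, w₁,…,w_m > 0, and let x be feasible with MFCQ holding at x. If u = 0 is a minimizer of (1/2)‖u + ∇f(x)‖² over the set {u ∈ ℝⁿ : ⟨∇g_i(x), u⟩ ≤ −α g_i(x) − w_i‖u‖² for all i ∈ {1,…,m}}, then x is a KKT point of minimizing f subject to g_i ≤ 0. -/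
open scoped RealInnerProductSpace

open Filter

variable {E : Type*} [NormedAddCommGroup E] [InnerProductSpace ℝ E]

/-- The cone generated by `a i`, `i ∈ T`. -/
def coneOf (m : ℕ) (a : Fin m → E) (T : Finset (Fin m)) : Set E :=
  {x | ∃ lam : Fin m → ℝ, (∀ i ∈ T, 0 ≤ lam i) ∧ x = ∑ i ∈ T, lam i • a i}

lemma coneOf_carath {m : ℕ} (a : Fin m → E) (T : Finset (Fin m)) :
    ∀ x ∈ coneOf m a T, ∃ T' : Finset (Fin m),
      LinearIndependent ℝ (fun i : T' => a (i : Fin m)) ∧ x ∈ coneOf m a T' := by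
  classical
  induction T using Finset.strongInduction with
  | _ T ih =>
    intro x hx
    by_cases hli : LinearIndependent ℝ (fun i : T => a (i : Fin m))
    · exact ⟨T, hli, hx⟩
    · obtain ⟨lam, hlam, hsum⟩ := hx
      obtain ⟨gg, hg0, j0, hj0⟩ := Fintype.not_linearIndependent_iff.1 hli
      set ν : Fin m → ℝ := fun i => if h : i ∈ T then gg ⟨i, h⟩ else 0 with hν
      have hνsum : ∑ i ∈ T, ν i • a i = 0 := by
        rw [← Finset.sum_coe_sort T (fun i => ν i • a i)]
        rw [← hg0]
        apply Finset.sum_congr rfl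
        intro i _
        simp [hν, i.2]
      have hνj0 : ν (j0 : Fin m) ≠ 0 := by simp [hν, j0.2, hj0]
      set μ : Fin m → ℝ := if 0 < ν (j0 : Fin m) then ν else -ν with hμ
      have hμsum : ∑ i ∈ T, μ i • a i = 0 := by
        rw [hμ]; split
        · exact hνsum
        · simp only [Pi.neg_apply, neg_smul, Finset.sum_neg_distrib, hνsum, neg_zero]
      have hμj0 : 0 < μ (j0 : Fin m) := by
        rw [hμ]; split
        · assumption
        · simp only [Pi.neg_apply]
          rcases hνj0.lt_or_gt with h | h
          · linarith
          · linarith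
      set P := T.filter (fun i => 0 < μ i) with hP
      have hPne : P.Nonempty := ⟨j0, Finset.mem_filter.2 ⟨j0.2, hμj0⟩⟩
      obtain ⟨j, hjP, hjmin⟩ := P.exists_min_image (fun i => lam i / μ i) hPne
      have hjT : j ∈ T := (Finset.mem_filter.1 hjP).1
      have hμj : 0 < μ j := (Finset.mem_filter.1 hjP).2
      set t : ℝ := lam j / μ j with ht
      have ht0 : 0 ≤ t := div_nonneg (hlam j hjT) hμj.le
      set lam' : Fin m → ℝ := fun i => lam i - t * μ i with hlam'
      have h1 : ∀ i ∈ T, 0 ≤ lam' i := by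
        intro i hiT
        rcases le_or_gt (μ i) 0 with h | h
        · have : t * μ i ≤ 0 := mul_nonpos_of_nonneg_of_nonpos ht0 h
          have := hlam i hiT
          simp only [hlam']; linarith
        · have hmin := hjmin i (Finset.mem_filter.2 ⟨hiT, h⟩)
          have : t * μ i ≤ lam i := by
            rw [ht]
            calc lam j / μ j * μ i ≤ lam i / μ i * μ i := by
                  apply mul_le_mul_of_nonneg_right hmin h.le
              _ = lam i := div_mul_cancel₀ _ h.ne'
          simp only [hlam']; linarith
      have h2 : lam' j = 0 := by
        simp only [hlam', ht]
        rw [div_mul_cancel₀ _ hμj.ne']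
        ring
      have h3 : x ∈ coneOf m a (T.erase j) := by
        refine ⟨lam', fun i hi => h1 i (Finset.mem_of_mem_erase hi), ?_⟩
        rw [Finset.sum_erase _ (by rw [h2, zero_smul])]
        have : ∑ i ∈ T, lam' i • a i
            = ∑ i ∈ T, lam i • a i - t • ∑ i ∈ T, μ i • a i := by
          rw [Finset.smul_sum, ← Finset.sum_sub_distrib]
          apply Finset.sum_congr rfl
          intro i _
          simp [hlam', sub_smul, smul_smul]
        rw [this, hμsum, smul_zero, sub_zero, hsum]
      exact ih (T.erase j) (Finset.erase_ssubset hjT) x h3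

lemma coneOf_isClosed {m : ℕ} [FiniteDimensional ℝ E] (a : Fin m → E) (T : Finset (Fin m))
    (hli : LinearIndependent ℝ (fun i : T => a (i : Fin m))) : IsClosed (coneOf m a T) := by
  classical
  let L : (↥T → ℝ) →ₗ[ℝ] E :=
    { toFun := fun c => ∑ i : ↥T, c i • a (i : Fin m)
      map_add' := fun c d => by
        simp [add_smul, Finset.sum_add_distrib]
      map_smul' := fun r c => by
        simp [smul_smul, Finset.smul_sum] }
  have hker : LinearMap.ker L = ⊥ := by
    rw [LinearMap.ker_eq_bot']
    intro c hc
    exact funext (Fintype.linearIndependent_iff.1 hli c hc)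
  have hemb := LinearMap.isClosedEmbedding_of_injective (𝕜 := ℝ) hker
  have himg : coneOf m a T = L '' {c | ∀ i, 0 ≤ c i} := by
    ext v
    constructor
    · rintro ⟨lam, h0, rfl⟩
      refine ⟨fun i => lam i, fun i => h0 i i.2, ?_⟩
      show ∑ i : ↥T, lam i • a (i : Fin m) = _
      rw [Finset.sum_coe_sort T (fun i => lam i • a i)]
    · rintro ⟨c, hc, rfl⟩
      refine ⟨fun i => if h : i ∈ T then c ⟨i, h⟩ else 0, fun i hi => by simp [hi, hc ⟨i, hi⟩], ?_⟩
      show (∑ i : ↥T, c i • a (i : Fin m)) = _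
      rw [← Finset.sum_coe_sort T (fun i => (if h : i ∈ T then c ⟨i, h⟩ else 0) • a i)]
      apply Finset.sum_congr rfl
      intro i _
      simp [i.2]
  rw [himg]
  refine hemb.isClosedMap _ ?_
  have : {c : ↥T → ℝ | ∀ i, 0 ≤ c i} = ⋂ i, {c : ↥T → ℝ | 0 ≤ c i} := by
    ext c; simp [Set.mem_iInter]
  rw [this]
  exact isClosed_iInter fun i => isClosed_le continuous_const (continuous_apply i)

lemma farkas {m : ℕ} [FiniteDimensional ℝ E] (a : Fin m → E) (b : E)
    (h : ∀ u : E, (∀ i, ⟪a i, u⟫ ≤ 0) → ⟪b, u⟫ ≤ 0) :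
    ∃ lam : Fin m → ℝ, (∀ i, 0 ≤ lam i) ∧ b = ∑ i, lam i • a i := by
  classical
  set S := coneOf m a Finset.univ with hS
  have hconv : Convex ℝ S := by
    rintro v ⟨p, hp, rfl⟩ u ⟨q, hq, rfl⟩ s t hs ht _
    refine ⟨fun i => s * p i + t * q i,
      fun i hi => add_nonneg (mul_nonneg hs (hp i hi)) (mul_nonneg ht (hq i hi)), ?_⟩
    rw [Finset.smul_sum, Finset.smul_sum, ← Finset.sum_add_distrib]
    apply Finset.sum_congr rfl
    intro i _
    simp [add_smul, smul_smul]
  have hclosed : IsClosed S := by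
    have hun : S = ⋃ T : {T : Finset (Fin m) //
        LinearIndependent ℝ (fun i : {j // j ∈ T.1} => a i.1)}, coneOf m a T.1 := by
      ext v
      constructor
      · intro hv
        obtain ⟨T', hli, hmem⟩ := coneOf_carath a Finset.univ v hv
        exact Set.mem_iUnion.2 ⟨⟨T', hli⟩, hmem⟩
      · intro hv
        rw [Set.mem_iUnion] at hv
        obtain ⟨⟨T, hli⟩, lam, h0, rfl⟩ := hv
        refine ⟨fun i => if i ∈ T then lam i else 0, ?_, ?_⟩
        · intro i _
          by_cases hiT : i ∈ T <;> simp [hiT, h0 i]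
        · simp only [ite_smul, zero_smul]
          rw [Finset.sum_ite_mem, Finset.univ_inter]
    rw [hun]
    exact isClosed_iUnion_of_finite fun T => coneOf_isClosed a T.1 T.2
  have hbS : b ∈ S := by
    by_contra hb
    obtain ⟨φ, u, hφS, hub⟩ := geometric_hahn_banach_closed_point hconv hclosed hb
    set d := (InnerProductSpace.toDual ℝ E).symm φ with hd
    have hdy : ∀ y, ⟪d, y⟫ = φ y := fun y => InnerProductSpace.toDual_symm_apply
    have h0S : (0 : E) ∈ S := ⟨fun _ => 0, fun i _ => le_refl 0, by simp⟩
    have hu0 : 0 < u := by have := hφS 0 h0S; simpa using this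
    have hai : ∀ i, ⟪a i, d⟫ ≤ 0 := by
      intro i
      by_contra hpos
      push_neg at hpos
      have hφa : 0 < φ (a i) := by rw [← hdy (a i)]; rwa [real_inner_comm]
      have hmem : (u / φ (a i)) • a i ∈ S := by
        refine ⟨fun j => if j = i then u / φ (a i) else 0, ?_, ?_⟩
        · intro j _
          by_cases hj : j = i <;> simp [hj, div_nonneg hu0.le hφa.le]
        · simp [ite_smul, Finset.sum_ite_eq']
      have hlt := hφS _ hmem
      rw [map_smul, smul_eq_mul, div_mul_cancel₀ _ hφa.ne'] at hlt
      exact lt_irrefl u hlt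
    have hbd := h d hai
    have hbd2 : u < ⟪b, d⟫ := by rw [real_inner_comm, hdy]; exact hub
    linarith
  obtain ⟨lam, hlam, hsum⟩ := hbS
  exact ⟨lam, fun i => hlam i (Finset.mem_univ i), hsum⟩

/-- If `u = 0` minimizes the direction-finding QCQP at a feasible
point `x` satisfying MFCQ, then `x` is a KKT point of the original problem. -/
theorem zero_minimizer_implies_KKT {n m : ℕ}
    (f : EuclideanSpace ℝ (Fin n) → ℝ)
    (g : Fin m → EuclideanSpace ℝ (Fin n) → ℝ)
    (hf : Differentiable ℝ f)
    (hg : ∀ i, Differentiable ℝ (g i))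
    (α : ℝ) (hα : 0 < α)
    (w : Fin m → ℝ) (hw : ∀ i, 0 < w i)
    (x : EuclideanSpace ℝ (Fin n))
    (hfeas : ∀ i, g i x ≤ 0)
    (hMFCQ : ∃ d : EuclideanSpace ℝ (Fin n),
      ∀ i, g i x = 0 → ⟪gradient (g i) x, d⟫ < 0)
    (hmin : (0 : EuclideanSpace ℝ (Fin n)) ∈
        {u : EuclideanSpace ℝ (Fin n) |
          ∀ i, ⟪gradient (g i) x, u⟫ ≤ -α * g i x - w i * ‖u‖ ^ 2} ∧
      IsMinOn (fun u : EuclideanSpace ℝ (Fin n) => (1 / 2) * ‖u + gradient f x‖ ^ 2)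
        {u : EuclideanSpace ℝ (Fin n) |
          ∀ i, ⟪gradient (g i) x, u⟫ ≤ -α * g i x - w i * ‖u‖ ^ 2} 0) :
    ∃ lam : Fin m → ℝ,
      (∀ i, 0 ≤ lam i) ∧
      gradient f x + ∑ i, lam i • gradient (g i) x = 0 ∧
      (∀ i, g i x ≤ 0) ∧
      (∀ i, lam i * g i x = 0) := by
  classical
  set c : EuclideanSpace ℝ (Fin n) := gradient f x with hc
  set a : Fin m → EuclideanSpace ℝ (Fin n) := fun i => gradient (g i) x with ha
  set C : Set (EuclideanSpace ℝ (Fin n)) := {u : EuclideanSpace ℝ (Fin n) | ∀ i, ⟪a i, u⟫ ≤ -α * g i x - w i * ‖u‖ ^ 2} with hC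
  obtain ⟨h0C, hminOn⟩ := hmin
  -- Step A: first-order optimality over the whole constraint set
  have hA : ∀ u ∈ C, 0 ≤ ⟪c, u⟫ := by
    intro u hu
    by_contra hneg
    push_neg at hneg
    have hu0 : u ≠ 0 := by
      intro h0
      rw [h0, inner_zero_right] at hneg
      exact lt_irrefl 0 hneg
    have hnorm : (0:ℝ) < ‖u‖ ^ 2 := pow_pos (norm_pos_iff.mpr hu0) 2
    set t : ℝ := min 1 (-⟪c, u⟫ / ‖u‖ ^ 2) with htdef
    have ht0 : 0 < t := lt_min one_pos (div_pos (by linarith) hnorm)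
    have ht1 : t ≤ 1 := min_le_left _ _
    have htq : t * ‖u‖ ^ 2 ≤ -⟪c, u⟫ := by
      have := min_le_right 1 (-⟪c, u⟫ / ‖u‖ ^ 2)
      calc t * ‖u‖ ^ 2 ≤ (-⟪c, u⟫ / ‖u‖ ^ 2) * ‖u‖ ^ 2 :=
            mul_le_mul_of_nonneg_right this hnorm.le
        _ = -⟪c, u⟫ := div_mul_cancel₀ _ hnorm.ne'
    have htu : t • u ∈ C := by
      intro i
      have hcon := hu i
      have hgi : 0 ≤ -α * g i x := by nlinarith [mul_nonneg hα.le (neg_nonneg.2 (hfeas i))]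
      rw [real_inner_smul_right, norm_smul, Real.norm_eq_abs, abs_of_pos ht0, mul_pow]
      nlinarith [mul_le_mul_of_nonneg_left hcon ht0.le,
        mul_nonneg (mul_nonneg ht0.le (sub_nonneg.2 ht1))
          (mul_nonneg (hw i).le (sq_nonneg ‖u‖))]
    have hge := isMinOn_iff.1 hminOn (t • u) htu
    rw [zero_add] at hge
    rw [norm_add_sq_real, norm_smul, Real.norm_eq_abs, abs_of_pos ht0, mul_pow,
      real_inner_smul_left] at hge
    rw [← real_inner_comm u c] at hge
    nlinarith [mul_le_mul_of_nonneg_left htq ht0.le]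
  -- Step B: strict feasible directions give nonnegative inner product
  have hB : ∀ v : EuclideanSpace ℝ (Fin n), (∀ i, g i x = 0 → ⟪a i, v⟫ < 0) → 0 ≤ ⟪c, v⟫ := by
    intro v hv
    have hev : ∀ i, ∀ᶠ ε in nhdsWithin (0:ℝ) (Set.Ioi 0),
        ⟪a i, ε • v⟫ ≤ -α * g i x - w i * ‖ε • v‖ ^ 2 := by
      intro i
      rcases eq_or_lt_of_le (hfeas i) with hgi | hgi
      · -- active constraint
        have hlt := hv i hgi
        have hcont : Continuous fun ε : ℝ => ⟪a i, v⟫ + ε * (w i * ‖v‖ ^ 2) := by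
          fun_prop
        have h0 : Filter.Tendsto (fun ε : ℝ => ⟪a i, v⟫ + ε * (w i * ‖v‖ ^ 2))
            (nhdsWithin (0:ℝ) (Set.Ioi 0)) (nhds (⟪a i, v⟫)) := by
          simpa using (hcont.tendsto 0).mono_left nhdsWithin_le_nhds
        filter_upwards [h0.eventually_lt_const hlt, self_mem_nhdsWithin] with ε hε hεpos
        have hεpos' : (0:ℝ) < ε := hεpos
        rw [real_inner_smul_right, norm_smul, Real.norm_eq_abs, abs_of_pos hεpos', mul_pow, hgi]
        nlinarith [mul_le_mul_of_nonneg_left hε.le hεpos'.le]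
      · -- inactive constraint
        have hcont : Continuous fun ε : ℝ => ε * ⟪a i, v⟫ + w i * (ε ^ 2 * ‖v‖ ^ 2) := by
          fun_prop
        have h0 : Filter.Tendsto (fun ε : ℝ => ε * ⟪a i, v⟫ + w i * (ε ^ 2 * ‖v‖ ^ 2))
            (nhdsWithin (0:ℝ) (Set.Ioi 0)) (nhds 0) := by
          simpa using (hcont.tendsto 0).mono_left nhdsWithin_le_nhds
        have hpos : (0:ℝ) < -α * g i x := by nlinarith
        filter_upwards [h0.eventually_lt_const hpos, self_mem_nhdsWithin] with ε hε hεpos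
        have hεpos' : (0:ℝ) < ε := hεpos
        rw [real_inner_smul_right, norm_smul, Real.norm_eq_abs, abs_of_pos hεpos', mul_pow]
        nlinarith
    obtain ⟨ε, hεmem, hεpos⟩ := ((Filter.eventually_all.2 hev).and self_mem_nhdsWithin).exists
    have hεpos' : (0:ℝ) < ε := hεpos
    have hmem : ε • v ∈ C := hεmem
    have := hA _ hmem
    rw [real_inner_smul_right] at this
    nlinarith
  -- Step C: weak feasible directions via MFCQ
  obtain ⟨d, hd⟩ := hMFCQ
  have hKey : ∀ u : EuclideanSpace ℝ (Fin n), (∀ i, g i x = 0 → ⟪a i, u⟫ ≤ 0) → 0 ≤ ⟪c, u⟫ := by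
    intro u hu
    have hδ : ∀ δ : ℝ, 0 < δ → 0 ≤ ⟪c, u⟫ + δ * ⟪c, d⟫ := by
      intro δ hδpos
      have hstrict : ∀ i, g i x = 0 → ⟪a i, u + δ • d⟫ < 0 := by
        intro i hi
        rw [inner_add_right, real_inner_smul_right]
        have h1 := hu i hi
        have h2 := hd i hi
        nlinarith
      have := hB (u + δ • d) hstrict
      rwa [inner_add_right, real_inner_smul_right] at this
    by_contra hneg
    push_neg at hneg
    set M : ℝ := |⟪c, d⟫| + 1 with hM
    have hM0 : (0:ℝ) < M := by positivity
    have hδpos : 0 < -⟪c, u⟫ / (2 * M) := div_pos (by linarith) (by linarith)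
    have habs : ⟪c, d⟫ ≤ M := by
      have := le_abs_self (⟪c, d⟫ : ℝ)
      linarith
    have h2 := mul_le_mul_of_nonneg_left habs hδpos.le
    have h3 := hδ _ hδpos
    have h4 : -⟪c, u⟫ / (2 * M) * M = -⟪c, u⟫ / 2 := by
      field_simp
    rw [h4] at h2
    nlinarith
  -- Step D: Farkas
  set a' : Fin m → EuclideanSpace ℝ (Fin n) := fun i => if g i x = 0 then a i else 0 with ha'
  obtain ⟨lam', hlam', hsum'⟩ := farkas a' (-c) (by
    intro u hu
    have := hKey u (fun i hi => by
      have h := hu i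
      simpa [ha', if_pos hi] using h)
    rw [inner_neg_left]
    linarith)
  refine ⟨fun i => if g i x = 0 then lam' i else 0, ?_, ?_, hfeas, ?_⟩
  · intro i
    by_cases hi : g i x = 0 <;> simp [hi, hlam' i]
  · have hsum : ∑ i, (if g i x = 0 then lam' i else 0) • a i = ∑ i, lam' i • a' i := by
      apply Finset.sum_congr rfl
      intro i _
      by_cases hi : g i x = 0 <;> simp [ha', hi]
    show c + ∑ i, (if g i x = 0 then lam' i else 0) • a i = 0
    rw [hsum, ← hsum']
    simp
  · intro i
    by_cases hi : g i x = 0 <;> simp [hi]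
end

section
/- Let f, g₁,…,g_m : ℝⁿ → ℝ be differentiable, α > 0, w₁,…,w_m > 0, and let x be a KKT point of minimizing f subject to g_i ≤ 0. Then u = 0 is a minimizer of (1/2)‖u + ∇f(x)‖² over K = {u ∈ ℝⁿ : ⟨∇g_i(x), u⟩ ≤ −α g_i(x) − w_i‖u‖² for all i ∈ {1,…,m}}, and it is the unique minimizer: every minimizer of this problem over K equals 0. -/
open scoped RealInnerProductSpace

/-- If `x` is a KKT point, then `u = 0` is the unique minimizer of
the direction-finding QCQP at `x`. -/
theorem KKT_implies_zero_unique_minimizer {n m : ℕ}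
    (f : EuclideanSpace ℝ (Fin n) → ℝ)
    (g : Fin m → EuclideanSpace ℝ (Fin n) → ℝ)
    (hf : Differentiable ℝ f)
    (hg : ∀ i, Differentiable ℝ (g i))
    (α : ℝ) (hα : 0 < α)
    (w : Fin m → ℝ) (hw : ∀ i, 0 < w i)
    (x : EuclideanSpace ℝ (Fin n))
    (hKKT : ∃ lam : Fin m → ℝ,
      (∀ i, 0 ≤ lam i) ∧
      gradient f x + ∑ i, lam i • gradient (g i) x = 0 ∧
      (∀ i, g i x ≤ 0) ∧
      (∀ i, lam i * g i x = 0)) :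
    (0 : EuclideanSpace ℝ (Fin n)) ∈
        {u : EuclideanSpace ℝ (Fin n) |
          ∀ i, ⟪gradient (g i) x, u⟫ ≤ -α * g i x - w i * ‖u‖ ^ 2} ∧
    IsMinOn (fun u : EuclideanSpace ℝ (Fin n) => (1 / 2) * ‖u + gradient f x‖ ^ 2)
      {u : EuclideanSpace ℝ (Fin n) |
        ∀ i, ⟪gradient (g i) x, u⟫ ≤ -α * g i x - w i * ‖u‖ ^ 2} 0 ∧
    ∀ u : EuclideanSpace ℝ (Fin n),
      u ∈ {u : EuclideanSpace ℝ (Fin n) |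
          ∀ i, ⟪gradient (g i) x, u⟫ ≤ -α * g i x - w i * ‖u‖ ^ 2} →
      IsMinOn (fun u : EuclideanSpace ℝ (Fin n) => (1 / 2) * ‖u + gradient f x‖ ^ 2)
        {u : EuclideanSpace ℝ (Fin n) |
          ∀ i, ⟪gradient (g i) x, u⟫ ≤ -α * g i x - w i * ‖u‖ ^ 2} u →
      u = 0 := by
  obtain ⟨lam, hlam, hstat, hfeas, hcomp⟩ := hKKT
  -- feasibility of 0
  have h0mem : (0 : EuclideanSpace ℝ (Fin n)) ∈
      {u : EuclideanSpace ℝ (Fin n) |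
        ∀ i, ⟪gradient (g i) x, u⟫ ≤ -α * g i x - w i * ‖u‖ ^ 2} := by
    intro i
    simp only [inner_zero_right, norm_zero]
    have := hfeas i
    nlinarith [hα]
  -- key inequality
  have key : ∀ u ∈ {u : EuclideanSpace ℝ (Fin n) |
      ∀ i, ⟪gradient (g i) x, u⟫ ≤ -α * g i x - w i * ‖u‖ ^ 2},
      (1 / 2) * ‖(0 : EuclideanSpace ℝ (Fin n)) + gradient f x‖ ^ 2 + (1 / 2) * ‖u‖ ^ 2
        ≤ (1 / 2) * ‖u + gradient f x‖ ^ 2 := by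
    intro u hu
    have hgrad : gradient f x = -∑ i, lam i • gradient (g i) x := by
      linear_combination (norm := module) hstat
    have hinner : ⟪gradient f x, u⟫ = -∑ i, lam i * ⟪gradient (g i) x, u⟫ := by
      rw [hgrad, inner_neg_left, sum_inner]
      simp [real_inner_smul_left, Finset.mul_sum, mul_assoc]
    have hsum : ∑ i, lam i * ⟪gradient (g i) x, u⟫
        ≤ ∑ i, lam i * (-α * g i x - w i * ‖u‖ ^ 2) := by
      apply Finset.sum_le_sum
      intro i _
      exact mul_le_mul_of_nonneg_left (hu i) (hlam i)
    have hsum2 : ∑ i, lam i * (-α * g i x - w i * ‖u‖ ^ 2) ≤ 0 := by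
      apply Finset.sum_nonpos
      intro i _
      have h1 : lam i * g i x = 0 := hcomp i
      have h2 : 0 ≤ lam i * (w i * ‖u‖ ^ 2) :=
        mul_nonneg (hlam i) (mul_nonneg (hw i).le (sq_nonneg _))
      nlinarith
    have hexp : ‖u + gradient f x‖ ^ 2
        = ‖u‖ ^ 2 + 2 * ⟪u, gradient f x⟫ + ‖gradient f x‖ ^ 2 := by
      exact norm_add_sq_real u (gradient f x)
    have hsym : ⟪u, gradient f x⟫ = ⟪gradient f x, u⟫ := real_inner_comm _ _
    simp only [zero_add]
    nlinarith
  refine ⟨h0mem, ?_, ?_⟩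
  · intro u hu
    have := key u hu
    simp only [Set.mem_setOf_eq] at *
    nlinarith [sq_nonneg ‖u‖]
  · intro u hu hmin
    have h1 := hmin h0mem
    have h2 := key u hu
    simp only [Set.mem_setOf_eq, zero_add] at h1 h2 ⊢
    have : ‖u‖ ^ 2 ≤ 0 := by nlinarith
    have : ‖u‖ = 0 := by nlinarith [sq_nonneg ‖u‖, norm_nonneg u]
    exact norm_eq_zero.mp this
end

section
/- Let f, g₁,…,g_m : ℝⁿ → ℝ be differentiable, α > 0, w₁,…,w_m > 0, let A ⊆ {1,…,m} be any index set, and let x be feasible (g_i(x) ≤ 0 for all i). If u* is a minimizer of (1/2)‖u + ∇f(x)‖² over {u ∈ ℝⁿ : ⟨∇g_i(x), u⟩ ≤ −α g_i(x) − w_i‖u‖² for all i ∈ A}, then ⟨∇f(x), u*⟩ ≤ −‖u*‖²; in particular u* is a descent direction for f at x whenever u* ≠ 0. -/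
open scoped RealInnerProductSpace

/-- Any minimizer of the (active-set) direction-finding QCQP at a
feasible point is a descent direction for `f`:
`⟨∇f(x), u*⟩ ≤ -‖u*‖²`, and in particular `⟨∇f(x), u*⟩ < 0` when `u* ≠ 0`. -/
theorem qcqp_minimizer_descent_direction {n m : ℕ}
    (f : EuclideanSpace ℝ (Fin n) → ℝ)
    (g : Fin m → EuclideanSpace ℝ (Fin n) → ℝ)
    (hf : Differentiable ℝ f)
    (hg : ∀ i, Differentiable ℝ (g i))
    (α : ℝ) (hα : 0 < α)
    (w : Fin m → ℝ) (hw : ∀ i, 0 < w i)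
    (A : Set (Fin m))
    (x : EuclideanSpace ℝ (Fin n))
    (hfeas : ∀ i, g i x ≤ 0)
    (ustar : EuclideanSpace ℝ (Fin n))
    (hmem : ustar ∈ {u : EuclideanSpace ℝ (Fin n) |
      ∀ i ∈ A, ⟪gradient (g i) x, u⟫ ≤ -α * g i x - w i * ‖u‖ ^ 2})
    (hmin : IsMinOn (fun u : EuclideanSpace ℝ (Fin n) => (1 / 2) * ‖u + gradient f x‖ ^ 2)
      {u : EuclideanSpace ℝ (Fin n) |
        ∀ i ∈ A, ⟪gradient (g i) x, u⟫ ≤ -α * g i x - w i * ‖u‖ ^ 2} ustar) :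
    ⟪gradient f x, ustar⟫ ≤ -‖ustar‖ ^ 2 ∧
    (ustar ≠ 0 → ⟪gradient f x, ustar⟫ < 0) := by
  set v := gradient f x with hv
  set u := ustar with hu
  -- scaled points t • u, t ∈ [0,1], are feasible
  have key : ∀ t : ℝ, 0 ≤ t → t ≤ 1 →
      (1/2) * ‖u + v‖^2 ≤ (1/2) * ‖t • u + v‖^2 := by
    intro t ht0 ht1
    apply hmin
    intro i hi
    have h1 := hmem i hi
    have hgi := hfeas i
    have hwi := (hw i).le
    rw [real_inner_smul_right, norm_smul, Real.norm_eq_abs, abs_of_nonneg ht0]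
    have hs : (0:ℝ) ≤ ‖u‖^2 := sq_nonneg _
    nlinarith [mul_nonneg (mul_nonneg hwi hs) (mul_nonneg ht0 (sub_nonneg.2 ht1)),
      mul_nonneg (mul_nonneg hα.le (neg_nonneg.2 hgi)) (sub_nonneg.2 ht1)]
  have expand : ∀ t : ℝ, 0 ≤ t →
      ‖t • u + v‖^2 = t^2 * ‖u‖^2 + 2*t*⟪u,v⟫ + ‖v‖^2 := by
    intro t ht
    rw [norm_add_sq_real, real_inner_smul_left, norm_smul, Real.norm_eq_abs, abs_of_nonneg ht]
    ring
  have key' : ∀ t : ℝ, 0 ≤ t → t ≤ 1 →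
      ‖u‖^2 + 2*⟪u,v⟫ ≤ t^2 * ‖u‖^2 + 2*t*⟪u,v⟫ := by
    intro t ht0 ht1
    have := key t ht0 ht1
    rw [expand t ht0] at this
    have h1 : ‖u + v‖^2 = ‖u‖^2 + 2*⟪u,v⟫ + ‖v‖^2 := by
      have := expand 1 zero_le_one
      simpa using this
    rw [h1] at this
    linarith
  have main : ⟪u, v⟫ ≤ -‖u‖^2 := by
    by_contra hc
    push_neg at hc
    set S := ‖u‖^2 with hS
    set c := ⟪u,v⟫ with hcdef
    have hS0 : 0 ≤ S := sq_nonneg _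
    rcases eq_or_lt_of_le hS0 with hS0' | hSpos
    · have := key' 0 le_rfl zero_le_one
      simp at this
      linarith
    · have hsum : 0 < S + c := by linarith
      set ε : ℝ := min 1 ((S + c)/S) with hε
      have hε0 : 0 < ε := lt_min one_pos (div_pos hsum hSpos)
      have hε1 : ε ≤ 1 := min_le_left _ _
      have hεS : ε * S ≤ S + c := by
        have : ε ≤ (S + c)/S := min_le_right _ _
        calc ε * S ≤ ((S+c)/S) * S := by nlinarith
        _ = S + c := by field_simp
      have hk := key' (1 - ε) (by linarith) (by linarith)
      -- S + 2c ≤ (1-ε)² S + 2(1-ε) c  ⇒  0 ≤ ε((ε-2)S - 2c)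
      have h2 : 0 ≤ ε * ((ε - 2) * S - 2 * c) := by nlinarith
      have h3 : 0 ≤ (ε - 2) * S - 2 * c := nonneg_of_mul_nonneg_right h2 hε0
      nlinarith
  refine ⟨by rw [real_inner_comm]; exact main, fun hne => ?_⟩
  have : 0 < ‖u‖^2 := pow_pos (norm_pos_iff.mpr hne) 2
  rw [real_inner_comm]
  linarith
end

section
/- Let f : ℝⁿ → ℝ be differentiable, let f* ∈ ℝ, let t > 0, and let x : ℝ → ℝⁿ be continuously differentiable on [0, t]. Suppose f(x(τ)) ≥ f* for all τ ∈ [0, t] and ⟨∇f(x(τ)), x'(τ)⟩ ≤ −‖x'(τ)‖² for all τ ∈ [0, t]. Then there exists τ ∈ [0, t] such that ‖x'(τ)‖² ≤ 2·(f(x(0)) − f*)/t; i.e., the trajectory attains the non-ergodic O(1/t) stationarity rate. -/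
open scoped RealInnerProductSpace

/-- Non-ergodic O(1/t) stationarity rate: some time `τ ∈ [0,t]`
satisfies `‖x'(τ)‖² ≤ 2 (f(x(0)) − f*) / t`. -/
theorem nonergodic_rate {n : ℕ}
    (f : EuclideanSpace ℝ (Fin n) → ℝ) (hf : Differentiable ℝ f)
    (fstar : ℝ) (t : ℝ) (ht : 0 < t)
    (x : ℝ → EuclideanSpace ℝ (Fin n))
    (x' : ℝ → EuclideanSpace ℝ (Fin n))
    (hderiv : ∀ τ ∈ Set.Icc (0 : ℝ) t, HasDerivAt x (x' τ) τ)
    (hcont : ContinuousOn x' (Set.Icc (0 : ℝ) t))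
    (hlower : ∀ τ ∈ Set.Icc (0 : ℝ) t, fstar ≤ f (x τ))
    (hdescent : ∀ τ ∈ Set.Icc (0 : ℝ) t,
      ⟪gradient f (x τ), x' τ⟫ ≤ -‖x' τ‖ ^ 2) :
    ∃ τ ∈ Set.Icc (0 : ℝ) t, ‖x' τ‖ ^ 2 ≤ 2 * (f (x 0) - fstar) / t := by
  by_contra hcon
  push_neg at hcon
  set c : ℝ := 2 * (f (x 0) - fstar) / t with hc
  -- composite function g = f ∘ x
  set g : ℝ → ℝ := fun τ => f (x τ) with hg
  have hgderiv : ∀ τ ∈ Set.Icc (0 : ℝ) t,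
      HasDerivAt g (⟪gradient f (x τ), x' τ⟫) τ := by
    intro τ hτ
    have h1 := ((hf (x τ)).hasGradientAt.hasFDerivAt).comp_hasDerivAt τ (hderiv τ hτ)
    have h2 : ⟪gradient f (x τ), x' τ⟫ = fderiv ℝ f (x τ) (x' τ) := by simp
    rw [h2]
    exact h1.congr_deriv (by simp)
  have hgcont : ContinuousOn g (Set.Icc 0 t) := fun τ hτ =>
    ((hgderiv τ hτ).continuousAt).continuousWithinAt
  have hint : interior (Set.Icc (0:ℝ) t) = Set.Ioo 0 t := interior_Icc
  have hdiff : DifferentiableOn ℝ g (interior (Set.Icc (0:ℝ) t)) := by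
    rw [hint]
    intro τ hτ
    exact ((hgderiv τ (Set.Ioo_subset_Icc_self hτ)).differentiableAt).differentiableWithinAt
  have hlt : ∀ τ ∈ interior (Set.Icc (0:ℝ) t), deriv g τ < -c := by
    rw [hint]
    intro τ hτ
    have hτ' : τ ∈ Set.Icc (0:ℝ) t := Set.Ioo_subset_Icc_self hτ
    rw [(hgderiv τ hτ').deriv]
    have := hdescent τ hτ'
    have := hcon τ hτ'
    linarith
  have key := (convex_Icc (0:ℝ) t).image_sub_lt_mul_sub_of_deriv_lt hgcont hdiff hlt
    0 (Set.left_mem_Icc.2 ht.le) t (Set.right_mem_Icc.2 ht.le) ht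
  -- key : g t - g 0 < -c * (t - 0)
  have h0 : fstar ≤ g 0 := hlower 0 (Set.left_mem_Icc.2 ht.le)
  have ht' : fstar ≤ g t := hlower t (Set.right_mem_Icc.2 ht.le)
  have hct : c * t = 2 * (g 0 - fstar) := by
    show c * t = 2 * (f (x 0) - fstar)
    rw [hc]
    exact div_mul_cancel₀ _ ht.ne'
  nlinarith
end

section
/- Let g : ℝⁿ → ℝ be differentiable with L-Lipschitz gradient (L > 0), let α > 0 and w > 0, let x ∈ ℝⁿ satisfy g(x) ≤ 0, and let u ∈ ℝⁿ satisfy ⟨∇g(x), u⟩ ≤ −α g(x) − w‖u‖². Then g(x + t·u) ≤ 0 for every t ∈ [0, min{1/α, 2w/L}]. -/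
open scoped RealInnerProductSpace

section Aux

variable {n : ℕ}

lemma hasDerivAt_comp_line (g : EuclideanSpace ℝ (Fin n) → ℝ) (hg : Differentiable ℝ g)
    (x u : EuclideanSpace ℝ (Fin n)) (s : ℝ) :
    HasDerivAt (fun s : ℝ => g (x + s • u)) ⟪gradient g (x + s • u), u⟫ s := by
  have hc : HasDerivAt (fun s : ℝ => x + s • u) u s := by
    simpa using ((hasDerivAt_id s).smul_const u).const_add x
  have hgd := (hg (x + s • u)).hasGradientAt.hasFDerivAt
  have := hgd.comp_hasDerivAt s hc
  simp only [InnerProductSpace.toDual_apply_apply] at this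
  exact this

/-- Descent lemma. -/
lemma descent_lemma (g : EuclideanSpace ℝ (Fin n) → ℝ) (hg : Differentiable ℝ g)
    (L : ℝ) (hL : 0 < L)
    (hlip : ∀ y z : EuclideanSpace ℝ (Fin n),
      ‖gradient g y - gradient g z‖ ≤ L * ‖y - z‖)
    (x u : EuclideanSpace ℝ (Fin n)) {t : ℝ} (ht : 0 ≤ t) :
    g (x + t • u) ≤ g x + t * ⟪gradient g x, u⟫ + L * t ^ 2 * ‖u‖ ^ 2 / 2 := by
  set φ : ℝ → ℝ := fun s => g (x + s • u) - s * ⟪gradient g x, u⟫ - L * s ^ 2 * ‖u‖ ^ 2 / 2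
    with hφ
  have hderiv : ∀ s : ℝ, HasDerivAt φ
      (⟪gradient g (x + s • u), u⟫ - ⟪gradient g x, u⟫ - L * s * ‖u‖ ^ 2) s := by
    intro s
    have h1 := hasDerivAt_comp_line g hg x u s
    have h2 : HasDerivAt (fun s : ℝ => s * ⟪gradient g x, u⟫) ⟪gradient g x, u⟫ s := by
      simpa using (hasDerivAt_id s).mul_const ⟪gradient g x, u⟫
    have h3 : HasDerivAt (fun s : ℝ => L * s ^ 2 * ‖u‖ ^ 2 / 2) (L * s * ‖u‖ ^ 2) s := by
      have : HasDerivAt (fun s : ℝ => s ^ 2) (2 * s) s := by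
        simpa using hasDerivAt_pow 2 s
      have := ((this.const_mul L).mul_const (‖u‖ ^ 2)).div_const 2
      exact this.congr_deriv (by ring)
    exact (h1.sub h2).sub h3
  have hanti : AntitoneOn φ (Set.Icc 0 t) := by
    apply antitoneOn_of_deriv_nonpos (convex_Icc 0 t)
    · exact Continuous.continuousOn (by
        have : Continuous φ := by
          apply Continuous.sub
          apply Continuous.sub
          · exact hg.continuous.comp (by continuity)
          · continuity
          · continuity
        exact this)
    · intro s _
      exact (hderiv s).differentiableAt.differentiableWithinAt
    · intro s hs
      rw [interior_Icc] at hs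
      rw [(hderiv s).deriv]
      have hcs : ⟪gradient g (x + s • u) - gradient g x, u⟫ ≤
          ‖gradient g (x + s • u) - gradient g x‖ * ‖u‖ :=
        real_inner_le_norm _ _
      have hlipb : ‖gradient g (x + s • u) - gradient g x‖ ≤ L * (s * ‖u‖) := by
        have := hlip (x + s • u) x
        simpa [norm_smul, abs_of_nonneg hs.1.le, mul_assoc] using this
      have : ⟪gradient g (x + s • u), u⟫ - ⟪gradient g x, u⟫ ≤ L * s * ‖u‖ ^ 2 := by
        rw [← inner_sub_left]
        calc ⟪gradient g (x + s • u) - gradient g x, u⟫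
            ≤ ‖gradient g (x + s • u) - gradient g x‖ * ‖u‖ := hcs
          _ ≤ L * (s * ‖u‖) * ‖u‖ := by
              apply mul_le_mul_of_nonneg_right hlipb (norm_nonneg u)
          _ = L * s * ‖u‖ ^ 2 := by ring
      linarith
  have := hanti (Set.left_mem_Icc.2 ht) (Set.right_mem_Icc.2 ht) ht
  simp only [hφ] at this
  simp only [zero_smul, add_zero, zero_mul, ne_eq, OfNat.ofNat_ne_zero,
    not_false_eq_true, zero_pow, mul_zero, zero_div, sub_zero] at this
  linarith

end Aux

/-- Feasibility along the QCQP search direction for step sizes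
`t ∈ [0, min{1/α, 2w/L}]`. -/
theorem feasibility_step_bound {n : ℕ}
    (g : EuclideanSpace ℝ (Fin n) → ℝ) (hg : Differentiable ℝ g)
    (L : ℝ) (hL : 0 < L)
    (hlip : ∀ y z : EuclideanSpace ℝ (Fin n),
      ‖gradient g y - gradient g z‖ ≤ L * ‖y - z‖)
    (α : ℝ) (hα : 0 < α) (w : ℝ) (hw : 0 < w)
    (x : EuclideanSpace ℝ (Fin n)) (hx : g x ≤ 0)
    (u : EuclideanSpace ℝ (Fin n))
    (hu : ⟪gradient g x, u⟫ ≤ -α * g x - w * ‖u‖ ^ 2) :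
    ∀ t ∈ Set.Icc (0 : ℝ) (min (1 / α) (2 * w / L)), g (x + t • u) ≤ 0 := by
  intro t ht
  obtain ⟨ht0, ht1⟩ := ht
  have htα : t * α ≤ 1 := by
    have := le_trans ht1 (min_le_left _ _)
    exact (le_div_iff₀ hα).mp this
  have htL : L * t ≤ 2 * w := by
    have := le_trans ht1 (min_le_right _ _)
    rw [le_div_iff₀ hL] at this
    nlinarith
  have hd := descent_lemma g hg L hL hlip x u ht0
  have key : g x + t * ⟪gradient g x, u⟫ + L * t ^ 2 * ‖u‖ ^ 2 / 2 ≤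
      (1 - t * α) * g x + t * ‖u‖ ^ 2 * (L * t / 2 - w) := by
    nlinarith [mul_le_mul_of_nonneg_left hu ht0]
  have h1 : (1 - t * α) * g x ≤ 0 :=
    mul_nonpos_of_nonneg_of_nonpos (by linarith) hx
  have h2 : t * ‖u‖ ^ 2 * (L * t / 2 - w) ≤ 0 := by
    apply mul_nonpos_of_nonneg_of_nonpos
    · positivity
    · linarith
  linarith
end

section
/- Let f : ℝⁿ → ℝ be differentiable with L-Lipschitz gradient (L > 0), let γ ∈ (0,1), and let x, u ∈ ℝⁿ satisfy ⟨∇f(x), u⟩ ≤ −‖u‖². Then the Armijo condition f(x + t·u) ≤ f(x) + γ·t·⟨∇f(x), u⟩ holds for every t ∈ [0, 2(1−γ)/L]. -/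
open scoped RealInnerProductSpace

/-- The Armijo condition holds for all step sizes
`t ∈ [0, 2(1−γ)/L]` along a direction satisfying `⟨∇f(x), u⟩ ≤ −‖u‖²`. -/
theorem armijo_step_bound {n : ℕ}
    (f : EuclideanSpace ℝ (Fin n) → ℝ) (hf : Differentiable ℝ f)
    (L : ℝ) (hL : 0 < L)
    (hlip : ∀ y z : EuclideanSpace ℝ (Fin n),
      ‖gradient f y - gradient f z‖ ≤ L * ‖y - z‖)
    (γ : ℝ) (hγ : γ ∈ Set.Ioo (0 : ℝ) 1)
    (x u : EuclideanSpace ℝ (Fin n))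
    (hu : ⟪gradient f x, u⟫ ≤ -‖u‖ ^ 2) :
    ∀ t ∈ Set.Icc (0 : ℝ) (2 * (1 - γ) / L),
      f (x + t • u) ≤ f x + γ * t * ⟪gradient f x, u⟫ := by
  intro t ht
  obtain ⟨ht0, ht1⟩ := ht
  set g := gradient f x with hg
  -- derivative of s ↦ f (x + s • u)
  have hderiv : ∀ s : ℝ,
      HasDerivAt (fun s : ℝ => f (x + s • u)) ⟪gradient f (x + s • u), u⟫ s := by
    intro s
    have hc : HasDerivAt (fun s : ℝ => x + s • u) u s := by
      simpa using ((hasDerivAt_id s).smul_const u).const_add x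
    have hfd := (hf (x + s • u)).hasGradientAt.hasFDerivAt
    have := hfd.comp_hasDerivAt s hc
    have h2 : HasDerivAt (fun s : ℝ => f (x + s • u)) ((InnerProductSpace.toDual ℝ _ (gradient f (x + s • u))) u) s := this
    simpa [InnerProductSpace.toDual_apply_apply] using h2
  -- auxiliary function
  set φ : ℝ → ℝ := fun s => f (x + s • u) - f x - s * ⟪g, u⟫ - L * s ^ 2 / 2 * ‖u‖ ^ 2
    with hφ
  have hφ' : ∀ s : ℝ,
      HasDerivAt φ (⟪gradient f (x + s • u) - g, u⟫ - L * s * ‖u‖ ^ 2) s := by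
    intro s
    have h1 := (hderiv s).sub_const (f x)
    have hlin : HasDerivAt (fun s : ℝ => s * ⟪g, u⟫) ⟪g, u⟫ s := by
      simpa using (hasDerivAt_id s).mul_const (⟪g, u⟫ : ℝ)
    have hq : HasDerivAt (fun s : ℝ => L * s ^ 2 / 2 * ‖u‖ ^ 2) (L * s * ‖u‖ ^ 2) s := by
      have := (((hasDerivAt_pow 2 s).const_mul L).div_const 2).mul_const (‖u‖ ^ 2)
      refine this.congr_deriv ?_
      push_cast
      ring
    have heq : (⟪gradient f (x + s • u) - g, u⟫ : ℝ) - L * s * ‖u‖ ^ 2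
        = (⟪gradient f (x + s • u), u⟫ - ⟪g, u⟫) - L * s * ‖u‖ ^ 2 := by
      rw [inner_sub_left]
    rw [heq]
    exact (h1.sub hlin).sub hq
  -- the derivative is nonpositive for s ≥ 0
  have hder_nonpos : ∀ s : ℝ, 0 ≤ s →
      ⟪gradient f (x + s • u) - g, u⟫ - L * s * ‖u‖ ^ 2 ≤ 0 := by
    intro s hs
    have h1 : ⟪gradient f (x + s • u) - g, u⟫ ≤ ‖gradient f (x + s • u) - g‖ * ‖u‖ :=
      real_inner_le_norm _ _
    have h2 : ‖gradient f (x + s • u) - g‖ ≤ L * (s * ‖u‖) := by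
      have := hlip (x + s • u) x
      simpa [norm_smul, abs_of_nonneg hs] using this
    have h3 : ‖gradient f (x + s • u) - g‖ * ‖u‖ ≤ L * (s * ‖u‖) * ‖u‖ :=
      mul_le_mul_of_nonneg_right h2 (norm_nonneg u)
    nlinarith [norm_nonneg u]
  -- φ is antitone on [0, t]
  have hant : AntitoneOn φ (Set.Icc 0 t) := by
    apply antitoneOn_of_deriv_nonpos (convex_Icc 0 t)
    · exact fun s _ => ((hφ' s).continuousAt).continuousWithinAt
    · exact fun s _ => (hφ' s).differentiableAt.differentiableWithinAt
    · intro s hs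
      rw [interior_Icc] at hs
      rw [(hφ' s).deriv]
      exact hder_nonpos s hs.1.le
  have hφt : φ t ≤ φ 0 :=
    hant (Set.left_mem_Icc.mpr ht0) (Set.right_mem_Icc.mpr ht0) ht0
  have hφ0 : φ 0 = 0 := by simp [hφ]
  -- descent lemma
  have hdesc : f (x + t • u) ≤ f x + t * ⟪g, u⟫ + L * t ^ 2 / 2 * ‖u‖ ^ 2 := by
    have := hφt
    rw [hφ0] at this
    simp only [hφ] at this
    linarith
  -- combine with step size bound
  have htL : L * t ≤ 2 * (1 - γ) := by
    have h := (le_div_iff₀ hL).mp ht1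
    linarith [mul_comm L t]
  have hγ1 : γ < 1 := hγ.2
  have hnn : (0:ℝ) ≤ ‖u‖ ^ 2 := sq_nonneg _
  nlinarith [mul_nonneg ht0 hnn, mul_nonneg (mul_nonneg ht0 ht0) hnn,
    mul_le_mul_of_nonneg_left hu ht0]
end

section
/- Let f be L_f-smooth and g_i be L_i-smooth (L_f, L_i > 0) for i = 1,…,m, let γ ∈ (0,1), α > 0, and w_i ≥ w̲ > 0 for all i. Let x be feasible (g_i(x) ≤ 0 for all i) and let u be a minimizer of (1/2)‖u + ∇f(x)‖² over {u ∈ ℝⁿ : ⟨∇g_i(x), u⟩ ≤ −α g_i(x) − w_i‖u‖² for all i ∈ {1,…,m}}. Set t̲ = min{1/α, 2(1−γ)/L_f, 2w̲/L₁, …, 2w̲/L_m}. Then for every t ∈ [0, t̲]: g_i(x + t·u) ≤ 0 for all i, and f(x + t·u) ≤ f(x) + γ·t·⟨∇f(x), u⟩. -/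
open scoped RealInnerProductSpace

variable {E : Type*} [NormedAddCommGroup E] [InnerProductSpace ℝ E] [CompleteSpace E]

lemma deriv_along (f : E → ℝ) (hf : Differentiable ℝ f) (x u : E) (s : ℝ) :
    HasDerivAt (fun s : ℝ => f (x + s • u)) ⟪gradient f (x + s • u), u⟫ s := by
  have h1 : HasDerivAt (fun s : ℝ => x + s • u) u s := by
    simpa using ((hasDerivAt_id s).smul_const u).const_add x
  have h2 : HasFDerivAt f (InnerProductSpace.toDual ℝ E (gradient f (x + s • u))) (x + s • u) :=
    (hf _).hasGradientAt
  exact h2.comp_hasDerivAt s h1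

lemma descent (f : E → ℝ) (hf : Differentiable ℝ f) (Lc : ℝ)
    (hlip : ∀ y z, ‖gradient f y - gradient f z‖ ≤ Lc * ‖y - z‖)
    (x u : E) (t : ℝ) (ht : 0 ≤ t) :
    f (x + t • u) ≤ f x + t * ⟪gradient f x, u⟫ + Lc * t ^ 2 / 2 * ‖u‖ ^ 2 := by
  set φ : ℝ → ℝ := fun s => f (x + s • u) - s * ⟪gradient f x, u⟫ - Lc * s ^ 2 / 2 * ‖u‖ ^ 2
  have hd : ∀ s : ℝ, HasDerivAt φ
      (⟪gradient f (x + s • u), u⟫ - ⟪gradient f x, u⟫ - Lc * s * ‖u‖ ^ 2) s := by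
    intro s
    have h1 := deriv_along f hf x u s
    have h2 : HasDerivAt (fun s : ℝ => s * ⟪gradient f x, u⟫) ⟪gradient f x, u⟫ s := by
      simpa using (hasDerivAt_id s).mul_const ⟪gradient f x, u⟫
    have h3 : HasDerivAt (fun s : ℝ => Lc * s ^ 2 / 2 * ‖u‖ ^ 2) (Lc * s * ‖u‖ ^ 2) s := by
      have : HasDerivAt (fun s : ℝ => Lc * s ^ 2 / 2 * ‖u‖ ^ 2)
          (Lc * (2 * s ^ 1) / 2 * ‖u‖ ^ 2) s := by
        exact (((hasDerivAt_pow 2 s).const_mul Lc).div_const 2).mul_const _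
      convert this using 1
      ring
    exact (h1.sub h2).sub h3
  have hmono : AntitoneOn φ (Set.Icc 0 t) := by
    apply antitoneOn_of_deriv_nonpos (convex_Icc 0 t)
    · exact fun s _ => (hd s).continuousAt.continuousWithinAt
    · exact fun s _ => (hd s).differentiableAt.differentiableWithinAt
    · intro s hs
      rw [(hd s).deriv]
      rw [interior_Icc] at hs
      have hs0 : 0 ≤ s := le_of_lt hs.1
      have key : ⟪gradient f (x + s • u) - gradient f x, u⟫ ≤ Lc * s * ‖u‖ ^ 2 := by
        calc ⟪gradient f (x + s • u) - gradient f x, u⟫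
            ≤ ‖gradient f (x + s • u) - gradient f x‖ * ‖u‖ := real_inner_le_norm _ _
          _ ≤ Lc * ‖(x + s • u) - x‖ * ‖u‖ := by
              gcongr ?_ * ‖u‖
              exact hlip _ _
          _ = Lc * (s * ‖u‖) * ‖u‖ := by simp [norm_smul, abs_of_nonneg hs0]
          _ = Lc * s * ‖u‖ ^ 2 := by ring
      have := inner_sub_left (𝕜 := ℝ) (gradient f (x + s • u)) (gradient f x) u
      linarith [key, this]
  have := hmono (Set.left_mem_Icc.mpr ht) (Set.right_mem_Icc.mpr ht) ht
  simp only [φ] at this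
  simp at this
  have key2 := hmono (Set.left_mem_Icc.mpr ht) (Set.right_mem_Icc.mpr ht) ht
  have h0 : φ 0 = f x := by simp [φ]
  have h1 : φ t = f (x + t • u) - t * ⟪gradient f x, u⟫ - Lc * t ^ 2 / 2 * ‖u‖ ^ 2 := rfl
  linarith [key2, h0, h1]

lemma var_ineq (gf u : E)
    (h : ∀ s : ℝ, 0 < s → s ≤ 1 →
      (1 / 2 : ℝ) * ‖u + gf‖ ^ 2 ≤ (1 / 2) * ‖(1 - s) • u + gf‖ ^ 2) :
    ⟪gf, u⟫ ≤ -‖u‖ ^ 2 := by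
  have key : ∀ s : ℝ, 0 < s → s ≤ 1 → ⟪u + gf, u⟫ ≤ s / 2 * ‖u‖ ^ 2 := by
    intro s hs hs1
    have h1 := h s hs hs1
    have expand : ‖(1 - s) • u + gf‖ ^ 2
        = ‖u + gf‖ ^ 2 - 2 * s * ⟪u + gf, u⟫ + s ^ 2 * ‖u‖ ^ 2 := by
      have e1 : (1 - s) • u + gf = (u + gf) - s • u := by
        rw [sub_smul, one_smul]; abel
      rw [e1, norm_sub_sq_real, real_inner_smul_right, norm_smul]
      simp [mul_pow]
      ring
    rw [expand] at h1
    nlinarith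
  have h0 : ⟪u + gf, u⟫ ≤ 0 := by
    by_contra hc
    push_neg at hc
    rcases eq_or_lt_of_le (sq_nonneg ‖u‖) with hu | hu
    · have := key 1 one_pos le_rfl
      nlinarith
    · set s := min 1 (⟪u + gf, u⟫ / ‖u‖ ^ 2) with hsdef
      have hspos : 0 < s := lt_min one_pos (by positivity)
      have := key s hspos (min_le_left _ _)
      have hs2 : s * ‖u‖ ^ 2 ≤ ⟪u + gf, u⟫ := by
        calc s * ‖u‖ ^ 2 ≤ (⟪u + gf, u⟫ / ‖u‖ ^ 2) * ‖u‖ ^ 2 := by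
              gcongr; exact min_le_right _ _
          _ = ⟪u + gf, u⟫ := by rw [div_mul_cancel₀ _ hu.ne']
      nlinarith
  have := inner_add_left (𝕜 := ℝ) u gf u
  rw [real_inner_self_eq_norm_sq] at this
  linarith [h0, this.symm.le]

/-- Safeguarded step-size lemma for the full SS-QCQP: every step
size `t ∈ [0, t̲]` with `t̲ = min{1/α, 2(1−γ)/L_f, 2w̲/L₁, …, 2w̲/L_m}` keeps the
iterate feasible and satisfies the Armijo condition.  Membership of `t` in
`[0, t̲]` is expressed by the conjunction of the bounds defining the minimum. -/
theorem ssqcqp_step_size {n m : ℕ}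
    (f : EuclideanSpace ℝ (Fin n) → ℝ)
    (g : Fin m → EuclideanSpace ℝ (Fin n) → ℝ)
    (hf : Differentiable ℝ f)
    (hg : ∀ i, Differentiable ℝ (g i))
    (Lf : ℝ) (hLf : 0 < Lf)
    (hflip : ∀ y z : EuclideanSpace ℝ (Fin n),
      ‖gradient f y - gradient f z‖ ≤ Lf * ‖y - z‖)
    (L : Fin m → ℝ) (hL : ∀ i, 0 < L i)
    (hglip : ∀ i, ∀ y z : EuclideanSpace ℝ (Fin n),
      ‖gradient (g i) y - gradient (g i) z‖ ≤ L i * ‖y - z‖)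
    (γ : ℝ) (hγ : γ ∈ Set.Ioo (0 : ℝ) 1)
    (α : ℝ) (hα : 0 < α)
    (wl : ℝ) (hwl : 0 < wl)
    (w : Fin m → ℝ) (hw : ∀ i, wl ≤ w i)
    (x : EuclideanSpace ℝ (Fin n))
    (hfeas : ∀ i, g i x ≤ 0)
    (u : EuclideanSpace ℝ (Fin n))
    (hmem : u ∈ {v : EuclideanSpace ℝ (Fin n) |
      ∀ i, ⟪gradient (g i) x, v⟫ ≤ -α * g i x - w i * ‖v‖ ^ 2})
    (hmin : IsMinOn (fun v : EuclideanSpace ℝ (Fin n) => (1 / 2) * ‖v + gradient f x‖ ^ 2)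
      {v : EuclideanSpace ℝ (Fin n) |
        ∀ i, ⟪gradient (g i) x, v⟫ ≤ -α * g i x - w i * ‖v‖ ^ 2} u) :
    ∀ t : ℝ, 0 ≤ t → t ≤ 1 / α → t ≤ 2 * (1 - γ) / Lf →
      (∀ i, t ≤ 2 * wl / L i) →
      (∀ i, g i (x + t • u) ≤ 0) ∧
      f (x + t • u) ≤ f x + γ * t * ⟪gradient f x, u⟫ := by
  intro t ht ht1 ht2 ht3
  obtain ⟨hγ0, hγ1⟩ := hγ
  -- variational inequality
  have hvar : ⟪gradient f x, u⟫ ≤ -‖u‖ ^ 2 := by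
    apply var_ineq
    intro s hs hs1
    refine hmin ?_
    intro i
    have hui := hmem i
    have hgi : 0 ≤ -α * g i x := by nlinarith [hfeas i]
    have h1 : ⟪gradient (g i) x, (1 - s) • u⟫ = (1 - s) * ⟪gradient (g i) x, u⟫ :=
      real_inner_smul_right _ _ _
    have h2 : ‖(1 - s) • u‖ ^ 2 = (1 - s) ^ 2 * ‖u‖ ^ 2 := by
      rw [norm_smul]; simp [mul_pow, abs_of_nonneg (by linarith : (0:ℝ) ≤ 1 - s)]
    rw [h1, h2]
    have hwi : 0 < w i := lt_of_lt_of_le hwl (hw i)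
    have ha : (0:ℝ) ≤ 1 - s := by linarith
    nlinarith [mul_le_mul_of_nonneg_left hui ha, mul_nonneg hs.le hgi,
      mul_nonneg (mul_nonneg (mul_nonneg hwi.le ha) hs.le) (sq_nonneg ‖u‖)]
  constructor
  · intro i
    have hd := descent (g i) (hg i) (L i) (hglip i) x u t ht
    have hui := hmem i
    have h1 : t * ⟪gradient (g i) x, u⟫ ≤ t * (-α * g i x - w i * ‖u‖ ^ 2) :=
      mul_le_mul_of_nonneg_left hui ht
    have hta : t * α ≤ 1 := by
      rw [le_div_iff₀ hα] at ht1; linarith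
    have htL : t * L i ≤ 2 * wl := by
      have := ht3 i
      rw [le_div_iff₀ (hL i)] at this; linarith
    have hwi : wl ≤ w i := hw i
    have hgx := hfeas i
    nlinarith [sq_nonneg ‖u‖, mul_nonneg ht (sq_nonneg ‖u‖),
      mul_nonneg (mul_nonneg ht ht) (sq_nonneg ‖u‖)]
  · have hd := descent f hf Lf hflip x u t ht
    have htf : t * Lf ≤ 2 * (1 - γ) := by
      rw [le_div_iff₀ hLf] at ht2; linarith
    have hA := mul_le_mul_of_nonneg_left hvar (mul_nonneg (by linarith : (0:ℝ) ≤ 1 - γ) ht)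
    have hB := mul_le_mul_of_nonneg_right htf (mul_nonneg ht (sq_nonneg ‖u‖))
    nlinarith [hA, hB]
end

section
/- Let f, g₁,…,g_m : ℝⁿ → ℝ be differentiable, let f* ∈ ℝ satisfy f(y) ≥ f* for every feasible y, let γ ∈ (0,1), α > 0, and t̲ > 0. Suppose sequences (x_k) in ℝⁿ, (u_k) in ℝⁿ, (t_k) in ℝ, and weights w_i^{(k)} > 0 satisfy for every k: (i) x_k is feasible; (ii) u_k is a minimizer of (1/2)‖u + ∇f(x_k)‖² over {u : ⟨∇g_i(x_k), u⟩ ≤ −α g_i(x_k) − w_i^{(k)}‖u‖² for all i ∈ {1,…,m}}; (iii) t_k ≥ t̲; (iv) x_{k+1} = x_k + t_k·u_k; and (v) f(x_{k+1}) ≤ f(x_k) + γ·t_k·⟨∇f(x_k), u_k⟩. Then for every k ≥ 0, min_{0 ≤ i ≤ k} ‖u_i‖² ≤ (f(x₀) − f*)/(γ·t̲·(k+1)). -/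
open scoped RealInnerProductSpace

/-- Convergence guarantee of the SS-QCQP algorithm:
`min_{0 ≤ i ≤ k} ‖u_i‖² ≤ (f(x₀) − f*)/(γ t̲ (k+1))`. -/
theorem ssqcqp_convergence {n m : ℕ}
    (f : EuclideanSpace ℝ (Fin n) → ℝ)
    (g : Fin m → EuclideanSpace ℝ (Fin n) → ℝ)
    (hf : Differentiable ℝ f)
    (hg : ∀ i, Differentiable ℝ (g i))
    (fstar : ℝ)
    (hlower : ∀ y : EuclideanSpace ℝ (Fin n), (∀ i, g i y ≤ 0) → fstar ≤ f y)
    (γ : ℝ) (hγ : γ ∈ Set.Ioo (0 : ℝ) 1)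
    (α : ℝ) (hα : 0 < α)
    (tl : ℝ) (htl : 0 < tl)
    (x : ℕ → EuclideanSpace ℝ (Fin n))
    (u : ℕ → EuclideanSpace ℝ (Fin n))
    (t : ℕ → ℝ)
    (w : ℕ → Fin m → ℝ) (hw : ∀ k i, 0 < w k i)
    (hfeas : ∀ k, ∀ i, g i (x k) ≤ 0)
    (hmem : ∀ k, u k ∈ {v : EuclideanSpace ℝ (Fin n) |
      ∀ i, ⟪gradient (g i) (x k), v⟫ ≤ -α * g i (x k) - w k i * ‖v‖ ^ 2})
    (hmin : ∀ k, IsMinOn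
      (fun v : EuclideanSpace ℝ (Fin n) => (1 / 2) * ‖v + gradient f (x k)‖ ^ 2)
      {v : EuclideanSpace ℝ (Fin n) |
        ∀ i, ⟪gradient (g i) (x k), v⟫ ≤ -α * g i (x k) - w k i * ‖v‖ ^ 2} (u k))
    (hstep : ∀ k, tl ≤ t k)
    (hupdate : ∀ k, x (k + 1) = x k + t k • u k)
    (harmijo : ∀ k, f (x (k + 1)) ≤ f (x k) + γ * t k * ⟪gradient f (x k), u k⟫) :
    ∀ k : ℕ, ∃ i ≤ k, ‖u i‖ ^ 2 ≤ (f (x 0) - fstar) / (γ * tl * (k + 1)) := by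
  obtain ⟨hγ0, hγ1⟩ := hγ
  -- key descent direction property
  have hdir : ∀ k, ⟪gradient f (x k), u k⟫ ≤ -‖u k‖ ^ 2 := by
    intro k
    by_contra hcon
    push_neg at hcon
    have hU0 : u k ≠ 0 := by
      intro h
      rw [h] at hcon
      simp at hcon
    have hnq : (0:ℝ) < ‖u k‖ ^ 2 := pow_pos (norm_pos_iff.mpr hU0) 2
    set ε : ℝ := ⟪gradient f (x k), u k⟫ + ‖u k‖ ^ 2 with hε
    have hεpos : 0 < ε := by rw [hε]; linarith
    set s : ℝ := max 0 (1 - ε / ‖u k‖ ^ 2) with hs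
    have hs0 : 0 ≤ s := le_max_left _ _
    have hs1 : s < 1 := by
      apply max_lt one_pos
      have : 0 < ε / ‖u k‖ ^ 2 := div_pos hεpos hnq
      linarith
    have hslb : 1 - ε / ‖u k‖ ^ 2 ≤ s := le_max_right _ _
    -- s • (u k) is feasible
    have hfeas' : s • (u k) ∈ {v : EuclideanSpace ℝ (Fin n) |
        ∀ i, ⟪gradient (g i) (x k), v⟫ ≤ -α * g i (x k) - w k i * ‖v‖ ^ 2} := by
      intro i
      have h1 := hmem k i
      have hg0 := hfeas k i
      have hwi := hw k i
      have hinner : ⟪gradient (g i) (x k), s • (u k)⟫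
          = s * ⟪gradient (g i) (x k), u k⟫ := real_inner_smul_right _ _ _
      have hnorm : ‖s • (u k)‖ ^ 2 = s ^ 2 * ‖u k‖ ^ 2 := by
        rw [norm_smul, Real.norm_eq_abs, abs_of_nonneg hs0, mul_pow]
      rw [hinner, hnorm]
      nlinarith [mul_le_mul_of_nonneg_left h1 hs0,
        mul_nonneg (mul_nonneg (sub_nonneg.mpr hs1.le) hα.le) (neg_nonneg.mpr hg0),
        mul_nonneg (mul_nonneg (mul_nonneg hs0 (sub_nonneg.mpr hs1.le)) hwi.le)
          (sq_nonneg ‖u k‖)]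
    have hkey := hmin k hfeas'
    simp only [Set.mem_setOf_eq] at hkey
    have hexp : ∀ v : EuclideanSpace ℝ (Fin n),
        ‖v + gradient f (x k)‖ ^ 2
          = ‖v‖ ^ 2 + 2 * ⟪v, gradient f (x k)⟫ + ‖gradient f (x k)‖ ^ 2 :=
      fun v => norm_add_sq_real v (gradient f (x k))
    rw [hexp, hexp] at hkey
    have hinner2 : ⟪s • (u k), gradient f (x k)⟫ = s * ⟪u k, gradient f (x k)⟫ :=
      real_inner_smul_left _ _ _
    have hnorm2 : ‖s • (u k)‖ ^ 2 = s ^ 2 * ‖u k‖ ^ 2 := by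
      rw [norm_smul, Real.norm_eq_abs, abs_of_nonneg hs0, mul_pow]
    rw [hinner2, hnorm2] at hkey
    have hAeq : ⟪u k, gradient f (x k)⟫ = ε - ‖u k‖ ^ 2 := by
      rw [real_inner_comm, hε]; ring
    rw [hAeq] at hkey
    have hdiv : (ε / ‖u k‖ ^ 2) * ‖u k‖ ^ 2 = ε := div_mul_cancel₀ _ (ne_of_gt hnq)
    have ha : 0 < 1 - s := by linarith
    have hanq : (1 - s) * ‖u k‖ ^ 2 ≤ ε := by
      have := mul_le_mul_of_nonneg_right (by linarith : 1 - s ≤ ε / ‖u k‖ ^ 2) hnq.le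
      linarith [hdiv]
    nlinarith [mul_pos ha (by linarith : (0:ℝ) < 2 * ε - (1 - s) * ‖u k‖ ^ 2)]
  -- per-step decrease
  have hdec : ∀ k, f (x (k + 1)) ≤ f (x k) - γ * tl * ‖u k‖ ^ 2 := by
    intro k
    have h1 := harmijo k
    have h2 := hdir k
    have h3 := hstep k
    have ht : 0 < t k := lt_of_lt_of_le htl h3
    nlinarith [mul_le_mul_of_nonneg_left h2 (mul_pos hγ0 ht).le,
      mul_nonneg (mul_nonneg (sub_nonneg.mpr h3) hγ0.le) (sq_nonneg ‖u k‖)]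
  -- summed decrease
  have hsum : ∀ k, f (x (k + 1)) ≤ f (x 0) - γ * tl * ∑ i ∈ Finset.range (k + 1), ‖u i‖ ^ 2 := by
    intro k
    induction k with
    | zero => simpa using hdec 0
    | succ k ih =>
      have := hdec (k + 1)
      rw [Finset.sum_range_succ]
      linarith
  intro k
  have hlow : fstar ≤ f (x (k + 1)) := hlower _ (hfeas (k + 1))
  have hbound : γ * tl * ∑ i ∈ Finset.range (k + 1), ‖u i‖ ^ 2 ≤ f (x 0) - fstar := by
    have := hsum k
    linarith
  obtain ⟨i, hi, himin⟩ := Finset.exists_min_image (Finset.range (k + 1))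
    (fun i => ‖u i‖ ^ 2) ⟨0, by simp⟩
  refine ⟨i, by simpa [Nat.lt_succ_iff] using hi, ?_⟩
  have hcard : ((k : ℝ) + 1) * ‖u i‖ ^ 2 ≤ ∑ j ∈ Finset.range (k + 1), ‖u j‖ ^ 2 := by
    calc ((k : ℝ) + 1) * ‖u i‖ ^ 2 = ∑ _j ∈ Finset.range (k + 1), ‖u i‖ ^ 2 := by
          rw [Finset.sum_const, Finset.card_range]; push_cast; ring
      _ ≤ ∑ j ∈ Finset.range (k + 1), ‖u j‖ ^ 2 :=
          Finset.sum_le_sum fun j hj => himin j hj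
  have hpos : 0 < γ * tl * ((k : ℝ) + 1) := by positivity
  rw [le_div_iff₀ hpos]
  nlinarith [mul_le_mul_of_nonneg_left hcard (mul_pos hγ0 htl).le]
end

section
/- Let f, g₁,…,g_m : ℝⁿ → ℝ be differentiable, let f* ∈ ℝ satisfy f(y) ≥ f* for every feasible y, let γ ∈ (0,1), α > 0, δ > 0, and t̲ > 0. Suppose sequences (x_k) in ℝⁿ, (u_k) in ℝⁿ, (t_k) in ℝ, index sets A_k ⊆ {1,…,m}, and weights w_i^{(k)} > 0 satisfy for every k: (i) x_k is feasible; (ii) {i : g_i(x_k) ≥ −δ} ⊆ A_k; (iii) u_k is a minimizer of (1/2)‖u + ∇f(x_k)‖² over {u : ⟨∇g_i(x_k), u⟩ ≤ −α g_i(x_k) − w_i^{(k)}‖u‖² for all i ∈ A_k}; (iv) t_k ≥ t̲; (v) x_{k+1} = x_k + t_k·u_k; and (vi) f(x_{k+1}) ≤ f(x_k) + γ·t_k·⟨∇f(x_k), u_k⟩. Then for every k ≥ 0, min_{0 ≤ i ≤ k} ‖u_i‖² ≤ (f(x₀) − f*)/(γ·t̲·(k+1)). -/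
open scoped RealInnerProductSpace

-- auxiliary algebra lemma: quadratic minimality on [0,1] at 1 forces a + b ≤ 0
lemma quad_min_aux (a b : ℝ) (ha : 0 ≤ a)
    (h : ∀ l : ℝ, 0 ≤ l → l ≤ 1 → (1/2) * a + b ≤ (1/2) * l^2 * a + l * b) :
    a + b ≤ 0 := by
  by_contra hc
  push_neg at hc
  rcases eq_or_lt_of_le ha with ha0 | hapos
  · have := h 0 le_rfl zero_le_one
    nlinarith
  · set l : ℝ := 1 - min 1 ((a+b)/a) with hl
    have hab : 0 < (a+b)/a := div_pos hc hapos
    have h1 : min 1 ((a+b)/a) ≤ 1 := min_le_left _ _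
    have h2 : 0 < min 1 ((a+b)/a) := lt_min one_pos hab
    have h3 : min 1 ((a+b)/a) ≤ (a+b)/a := min_le_right _ _
    have h4 : a * min 1 ((a+b)/a) ≤ a + b := by
      calc a * min 1 ((a+b)/a) ≤ a * ((a+b)/a) := mul_le_mul_of_nonneg_left h3 hapos.le
        _ = a + b := by field_simp
    have := h l (by rw [hl]; linarith) (by rw [hl]; linarith)
    have hl1 : l ≤ 1 := by rw [hl]; linarith
    nlinarith [sq_nonneg (1 - l), mul_pos hapos h2]

/-- Convergence guarantee of the active-set SS-QCQP algorithm
(SS-QCQP-AS): `min_{0 ≤ i ≤ k} ‖u_i‖² ≤ (f(x₀) − f*)/(γ t̲ (k+1))`. -/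
theorem ssqcqp_as_convergence {n m : ℕ}
    (f : EuclideanSpace ℝ (Fin n) → ℝ)
    (g : Fin m → EuclideanSpace ℝ (Fin n) → ℝ)
    (hf : Differentiable ℝ f)
    (hg : ∀ i, Differentiable ℝ (g i))
    (fstar : ℝ)
    (hlower : ∀ y : EuclideanSpace ℝ (Fin n), (∀ i, g i y ≤ 0) → fstar ≤ f y)
    (γ : ℝ) (hγ : γ ∈ Set.Ioo (0 : ℝ) 1)
    (α : ℝ) (hα : 0 < α)
    (δ : ℝ) (hδ : 0 < δ)
    (tl : ℝ) (htl : 0 < tl)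
    (x : ℕ → EuclideanSpace ℝ (Fin n))
    (u : ℕ → EuclideanSpace ℝ (Fin n))
    (t : ℕ → ℝ)
    (A : ℕ → Set (Fin m))
    (w : ℕ → Fin m → ℝ) (hw : ∀ k i, 0 < w k i)
    (hfeas : ∀ k, ∀ i, g i (x k) ≤ 0)
    (hactive : ∀ k, {i : Fin m | g i (x k) ≥ -δ} ⊆ A k)
    (hmem : ∀ k, u k ∈ {v : EuclideanSpace ℝ (Fin n) |
      ∀ i ∈ A k, ⟪gradient (g i) (x k), v⟫ ≤ -α * g i (x k) - w k i * ‖v‖ ^ 2})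
    (hmin : ∀ k, IsMinOn
      (fun v : EuclideanSpace ℝ (Fin n) => (1 / 2) * ‖v + gradient f (x k)‖ ^ 2)
      {v : EuclideanSpace ℝ (Fin n) |
        ∀ i ∈ A k, ⟪gradient (g i) (x k), v⟫ ≤ -α * g i (x k) - w k i * ‖v‖ ^ 2} (u k))
    (hstep : ∀ k, tl ≤ t k)
    (hupdate : ∀ k, x (k + 1) = x k + t k • u k)
    (harmijo : ∀ k, f (x (k + 1)) ≤ f (x k) + γ * t k * ⟪gradient f (x k), u k⟫) :
    ∀ k : ℕ, ∃ i ≤ k, ‖u i‖ ^ 2 ≤ (f (x 0) - fstar) / (γ * tl * (k + 1)) := by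
  obtain ⟨hγ0, hγ1⟩ := hγ
  -- Step 1: descent inequality
  have hdesc : ∀ k, ⟪gradient f (x k), u k⟫ ≤ -‖u k‖ ^ 2 := by
    intro k
    have hscaled : ∀ l : ℝ, 0 ≤ l → l ≤ 1 → (l • u k) ∈ {v : EuclideanSpace ℝ (Fin n) |
        ∀ i ∈ A k, ⟪gradient (g i) (x k), v⟫ ≤ -α * g i (x k) - w k i * ‖v‖ ^ 2} := by
      intro l hl0 hl1 i hi
      have hui := hmem k i hi
      have hgle := hfeas k i
      have hwk := hw k i
      rw [real_inner_smul_right, norm_smul]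
      have h1 : l * ⟪gradient (g i) (x k), u k⟫ ≤ l * (-α * g i (x k) - w k i * ‖u k‖ ^ 2) :=
        mul_le_mul_of_nonneg_left hui hl0
      have hnn : (0:ℝ) ≤ ‖u k‖ ^ 2 := sq_nonneg _
      have heq : (‖l‖ * ‖u k‖)^2 = l^2 * ‖u k‖^2 := by
        rw [mul_pow, Real.norm_eq_abs, sq_abs]
      rw [heq]
      nlinarith [mul_nonneg (mul_nonneg hwk.le hnn) (mul_nonneg hl0 (sub_nonneg.mpr hl1)),
        mul_nonneg (sub_nonneg.mpr hl1) (mul_nonneg hα.le (neg_nonneg.mpr hgle))]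
    have hlam : ∀ l : ℝ, 0 ≤ l → l ≤ 1 →
        (1/2) * ‖u k‖^2 + ⟪u k, gradient f (x k)⟫ ≤
        (1/2) * l^2 * ‖u k‖^2 + l * ⟪u k, gradient f (x k)⟫ := by
      intro l hl0 hl1
      have := hmin k (hscaled l hl0 hl1)
      simp only [Set.mem_setOf_eq] at this
      have e1 : ‖u k + gradient f (x k)‖^2
          = ‖u k‖^2 + 2 * ⟪u k, gradient f (x k)⟫ + ‖gradient f (x k)‖^2 := by
        rw [@norm_add_sq_real]
      have e2 : ‖l • u k + gradient f (x k)‖^2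
          = l^2 * ‖u k‖^2 + 2 * (l * ⟪u k, gradient f (x k)⟫) + ‖gradient f (x k)‖^2 := by
        rw [@norm_add_sq_real, real_inner_smul_left, norm_smul, mul_pow, Real.norm_eq_abs,
          sq_abs]
      rw [e1, e2] at this
      linarith
    have := quad_min_aux (‖u k‖^2) (⟪u k, gradient f (x k)⟫) (sq_nonneg _) hlam
    rw [real_inner_comm]
    linarith
  -- Step 2: per-step decrease
  have hdec : ∀ k, f (x (k+1)) ≤ f (x k) - γ * tl * ‖u k‖ ^ 2 := by
    intro k
    have h1 := harmijo k
    have h2 := hdesc k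
    have h3 := hstep k
    have hnn : (0:ℝ) ≤ ‖u k‖ ^ 2 := sq_nonneg _
    nlinarith [mul_nonneg (mul_nonneg hγ0.le (le_trans htl.le h3)) hnn,
      mul_le_mul_of_nonneg_left h2 (mul_nonneg hγ0.le (le_trans htl.le h3)),
      mul_le_mul_of_nonneg_right (mul_le_mul_of_nonneg_left h3 hγ0.le) hnn]
  -- Step 3: telescoping
  have hsum : ∀ k : ℕ, γ * tl * ∑ i ∈ Finset.range k, ‖u i‖ ^ 2 ≤ f (x 0) - f (x k) := by
    intro k
    induction k with
    | zero => simp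
    | succ k ih =>
      rw [Finset.sum_range_succ, mul_add]
      have := hdec k
      linarith
  intro k
  -- minimum over range (k+1)
  obtain ⟨i₀, hi₀mem, hi₀min⟩ := Finset.exists_min_image (Finset.range (k+1))
    (fun i => ‖u i‖ ^ 2) ⟨0, Finset.mem_range.mpr (Nat.succ_pos k)⟩
  refine ⟨i₀, Nat.lt_succ_iff.mp (Finset.mem_range.mp hi₀mem), ?_⟩
  have hcard : ((k:ℝ)+1) * ‖u i₀‖ ^ 2 ≤ ∑ i ∈ Finset.range (k+1), ‖u i‖ ^ 2 := by
    calc ((k:ℝ)+1) * ‖u i₀‖ ^ 2 = ∑ _i ∈ Finset.range (k+1), ‖u i₀‖ ^ 2 := by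
          rw [Finset.sum_const, Finset.card_range]; push_cast; ring
      _ ≤ ∑ i ∈ Finset.range (k+1), ‖u i‖ ^ 2 :=
          Finset.sum_le_sum fun i hi => hi₀min i hi
  have hf1 : fstar ≤ f (x (k+1)) := hlower _ (hfeas (k+1))
  have hs := hsum (k+1)
  have hpos : 0 < γ * tl * ((k:ℝ)+1) := by positivity
  rw [le_div_iff₀ hpos]
  have hγtl : 0 < γ * tl := mul_pos hγ0 htl
  nlinarith [mul_le_mul_of_nonneg_left hcard hγtl.le]
end

section
/- Let f, g₁,…,g_m : ℝⁿ → ℝ be continuously differentiable, α > 0, w̲ > 0, and suppose the feasible set F = {x : g_i(x) ≤ 0 for all i} is compact. Then there exists M > 0 such that for every x ∈ F, every index set A ⊆ {1,…,m}, every choice of weights w_i ≥ w̲, and every minimizer u of (1/2)‖u + ∇f(x)‖² over {u ∈ ℝⁿ : ⟨∇g_i(x), u⟩ ≤ −α g_i(x) − w_i‖u‖² for all i ∈ A}, one has ‖u‖ ≤ M; i.e., the set of active-set QCQP search directions over F is bounded. -/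
open scoped RealInnerProductSpace

/-- Uniform boundedness of the active-set QCQP search directions
over a compact feasible set. -/
theorem qcqp_directions_bounded {n m : ℕ}
    (f : EuclideanSpace ℝ (Fin n) → ℝ)
    (g : Fin m → EuclideanSpace ℝ (Fin n) → ℝ)
    (hf : ContDiff ℝ 1 f)
    (hg : ∀ i, ContDiff ℝ 1 (g i))
    (α : ℝ) (hα : 0 < α)
    (wl : ℝ) (hwl : 0 < wl)
    (F : Set (EuclideanSpace ℝ (Fin n)))
    (hF : F = {x | ∀ i, g i x ≤ 0})
    (hcompact : IsCompact F) :
    ∃ M : ℝ, 0 < M ∧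
      ∀ x ∈ F, ∀ A : Set (Fin m), ∀ w : Fin m → ℝ, (∀ i, wl ≤ w i) →
        ∀ u : EuclideanSpace ℝ (Fin n),
          u ∈ {v : EuclideanSpace ℝ (Fin n) |
            ∀ i ∈ A, ⟪gradient (g i) x, v⟫ ≤ -α * g i x - w i * ‖v‖ ^ 2} →
          IsMinOn
            (fun v : EuclideanSpace ℝ (Fin n) => (1 / 2) * ‖v + gradient f x‖ ^ 2)
            {v : EuclideanSpace ℝ (Fin n) |
              ∀ i ∈ A, ⟪gradient (g i) x, v⟫ ≤ -α * g i x - w i * ‖v‖ ^ 2} u →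
          ‖u‖ ≤ M := by
  -- the gradient of f is continuous
  have hgrad_cont : Continuous (fun x => gradient f x) := by
    have h1 : Continuous (fun x => fderiv ℝ f x) := hf.continuous_fderiv one_ne_zero
    have : (fun x => gradient f x) =
        (fun x => (InnerProductSpace.toDual ℝ (EuclideanSpace ℝ (Fin n))).symm
          (fderiv ℝ f x)) := rfl
    rw [this]
    exact (InnerProductSpace.toDual ℝ _).symm.continuous.comp h1
  obtain ⟨C, hC⟩ := hcompact.exists_bound_of_continuousOn
    ((hgrad_cont.norm).continuousOn)
  refine ⟨2 * max C 0 + 1, by positivity, ?_⟩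
  intro x hx A w hw u hu hmin
  have h0 : (0 : EuclideanSpace ℝ (Fin n)) ∈ {v : EuclideanSpace ℝ (Fin n) |
      ∀ i ∈ A, ⟪gradient (g i) x, v⟫ ≤ -α * g i x - w i * ‖v‖ ^ 2} := by
    intro i hi
    have hgx : g i x ≤ 0 := by rw [hF] at hx; exact hx i
    simp only [inner_zero_right, norm_zero]
    nlinarith
  have hmin0 := hmin h0
  simp only [Set.mem_setOf_eq, zero_add] at hmin0
  have hle : ‖u + gradient f x‖ ≤ ‖gradient f x‖ := by
    have h1 : (0:ℝ) ≤ ‖u + gradient f x‖ := norm_nonneg _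
    have h2 : (0:ℝ) ≤ ‖gradient f x‖ := norm_nonneg _
    nlinarith [hmin0]
  have hbound : ‖gradient f x‖ ≤ max C 0 := le_trans (by simpa using hC x hx) (le_max_left _ _)
  calc ‖u‖ = ‖(u + gradient f x) - gradient f x‖ := by rw [add_sub_cancel_right]
    _ ≤ ‖u + gradient f x‖ + ‖gradient f x‖ := norm_sub_le _ _
    _ ≤ ‖gradient f x‖ + ‖gradient f x‖ := by linarith
    _ = 2 * ‖gradient f x‖ := by ring
    _ ≤ 2 * max C 0 := by linarith
    _ ≤ 2 * max C 0 + 1 := by linarith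
end
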